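/- arXiv:2504.16174 — 2 statements merged into one kernel-verified Lean document; each statement's English description precedes it below -/
import Mathlib

section
/- Let k be a field, V and W 3-dimensional vector spaces, and let v₁, v₂ ∈ V be linearly independent and w₁, w₂ ∈ W be linearly independent. Then the intersection of the subspaces (v₁ ⊗ W + V ⊗ w₁) and (v₂ ⊗ W + V ⊗ w₂) of V ⊗ W equals the 2-dimensional span of v₁ ⊗ w₂ and v₂ ⊗ w₁. -/
/-!
Extend `v₁, v₂` and `w₁, w₂` to bases `(bᵢ)` and `(cⱼ)`. In the product basis `bᵢ ⊗ cⱼ`, the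
subspace `bₐ ⊗ W + V ⊗ c_b` is spanned by the basis vectors on the "cross" `{i = a} ∪ {j = b}`,
and subspaces spanned by parts of one basis intersect in the span of the common part. Two
crosses with distinct centres `(1, 1)` and `(2, 2)` meet exactly in `(1, 2)` and `(2, 1)`.
-/

open TensorProduct Submodule

namespace Module.Basis

variable {R M N ι κ : Type*}

theorem span_image_inf_span_image [Semiring R] [AddCommMonoid M] [Module R M] (b : Basis ι R M)
    (s t : Set ι) : span R (b '' s) ⊓ span R (b '' t) = span R (b '' (s ∩ t)) := by
  ext x
  simp only [mem_inf, mem_span_image, Set.subset_inter_iff]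

variable [CommSemiring R] [AddCommMonoid M] [Module R M] [AddCommMonoid N] [Module R N]
  (b : Basis ι R M) (c : Basis κ R N)

theorem range_mk_eq_span_tensorProduct_image (i : ι) :
    LinearMap.range (TensorProduct.mk R M N (b i)) =
      span R (b.tensorProduct c '' {p | p.1 = i}) := by
  rw [← Submodule.map_top, ← c.span_eq, map_span, ← Set.range_comp]
  congr 1
  ext x
  simp [tensorProduct_apply']

theorem range_mk_flip_eq_span_tensorProduct_image (j : κ) :
    LinearMap.range ((TensorProduct.mk R M N).flip (c j)) =
      span R (b.tensorProduct c '' {p | p.2 = j}) := by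
  rw [← Submodule.map_top, ← b.span_eq, map_span, ← Set.range_comp]
  congr 1
  ext x
  simp [tensorProduct_apply']


variable {b c}

theorem inf_sup_range_mk_eq_span_pair {i₁ i₂ : ι} {j₁ j₂ : κ} (hi : i₁ ≠ i₂) (hj : j₁ ≠ j₂) :
    (LinearMap.range (TensorProduct.mk R M N (b i₁)) ⊔
        LinearMap.range ((TensorProduct.mk R M N).flip (c j₁))) ⊓
      (LinearMap.range (TensorProduct.mk R M N (b i₂)) ⊔
        LinearMap.range ((TensorProduct.mk R M N).flip (c j₂)))
      = span R {b i₁ ⊗ₜ[R] c j₂, b i₂ ⊗ₜ[R] c j₁} := by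
  simp only [range_mk_eq_span_tensorProduct_image b c,
    range_mk_flip_eq_span_tensorProduct_image b c, ← span_union, ← Set.image_union,
    span_image_inf_span_image]
  have hcross : ({p | p.1 = i₁} ∪ {p | p.2 = j₁}) ∩ ({p | p.1 = i₂} ∪ {p | p.2 = j₂}) =
      ({(i₁, j₂), (i₂, j₁)} : Set (ι × κ)) := by
    ext ⟨i, j⟩
    simp only [Set.mem_inter_iff, Set.mem_union, Set.mem_ofPred_eq, Set.mem_insert_iff,
      Set.mem_singleton_iff, Prod.mk.injEq]
    grind
  rw [hcross, Set.image_pair, tensorProduct_apply, tensorProduct_apply]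

theorem linearIndependent_tensorProduct_pair [Nontrivial R] {i₁ i₂ : ι} (hi : i₁ ≠ i₂)
    (j₁ j₂ : κ) :
    LinearIndependent R ![b i₁ ⊗ₜ[R] c j₂, b i₂ ⊗ₜ[R] c j₁] := by
  have hinj : Function.Injective ![(i₁, j₂), (i₂, j₁)] := by
    intro p q
    fin_cases p <;> fin_cases q <;> simp [hi, hi.symm]
  have hpair : ![b i₁ ⊗ₜ[R] c j₂, b i₂ ⊗ₜ[R] c j₁] =
      b.tensorProduct c ∘ ![(i₁, j₂), (i₂, j₁)] := by
    ext p
    fin_cases p <;> simp [tensorProduct_apply]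
  rw [hpair]
  exact (b.tensorProduct c).linearIndependent.comp _ hinj

end Module.Basis

universe u

theorem LinearIndependent.exists_basis_pair {K : Type*} {V : Type u} [DivisionRing K]
    [AddCommGroup V] [Module K V] {x y : V} (h : LinearIndependent K ![x, y]) :
    ∃ (ι : Type u) (b : Module.Basis ι K V) (i j : ι), i ≠ j ∧ b i = x ∧ b j = y := by
  let s := h.linearIndepOn_id.extend (Set.subset_univ _)
  have hx : x ∈ s := Module.Basis.subset_extend _ ⟨0, rfl⟩
  have hy : y ∈ s := Module.Basis.subset_extend _ ⟨1, rfl⟩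
  refine ⟨s, Module.Basis.extend h.linearIndepOn_id, ⟨x, hx⟩, ⟨y, hy⟩, ?_,
    Module.Basis.extend_apply_self _ _, Module.Basis.extend_apply_self _ _⟩
  simpa using h.injective.ne (show (0 : Fin 2) ≠ 1 by decide)

theorem stmt2_general (k : Type*) [Field k]
    (V W : Type*) [AddCommGroup V] [Module k V] [AddCommGroup W] [Module k W]
    (v₁ v₂ : V) (w₁ w₂ : W)
    (hv : LinearIndependent k ![v₁, v₂]) (hw : LinearIndependent k ![w₁, w₂]) :
    ((LinearMap.range (TensorProduct.mk k V W v₁) ⊔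
        LinearMap.range ((TensorProduct.mk k V W).flip w₁)) ⊓
      (LinearMap.range (TensorProduct.mk k V W v₂) ⊔
        LinearMap.range ((TensorProduct.mk k V W).flip w₂))
      = Submodule.span k {v₁ ⊗ₜ[k] w₂, v₂ ⊗ₜ[k] w₁}) ∧
    Module.finrank k (Submodule.span k {v₁ ⊗ₜ[k] w₂, v₂ ⊗ₜ[k] w₁} : Submodule k (V ⊗[k] W))
      = 2 := by
  obtain ⟨_, b, i₁, i₂, hi, rfl, rfl⟩ := hv.exists_basis_pair
  obtain ⟨_, c, j₁, j₂, hj, rfl, rfl⟩ := hw.exists_basis_pair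
  refine ⟨Module.Basis.inf_sup_range_mk_eq_span_pair hi hj, ?_⟩
  rw [← Matrix.range_cons_cons_empty]
  exact finrank_span_eq_card (Module.Basis.linearIndependent_tensorProduct_pair hi j₁ j₂)

/-- Let `k` be a field, `V` and `W` 3-dimensional vector spaces, and let
`v₁, v₂ ∈ V` be linearly independent and `w₁, w₂ ∈ W` be linearly independent.  Then the
intersection of the subspaces `v₁ ⊗ W + V ⊗ w₁` and `v₂ ⊗ W + V ⊗ w₂` of `V ⊗ W` equals
the 2-dimensional span of `v₁ ⊗ w₂` and `v₂ ⊗ w₁`. -/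
theorem stmt2 (k : Type*) [Field k]
    (V W : Type*) [AddCommGroup V] [Module k V] [AddCommGroup W] [Module k W]
    [FiniteDimensional k V] [FiniteDimensional k W]
    (hV : Module.finrank k V = 3) (hW : Module.finrank k W = 3)
    (v₁ v₂ : V) (w₁ w₂ : W)
    (hv : LinearIndependent k ![v₁, v₂]) (hw : LinearIndependent k ![w₁, w₂]) :
    ((LinearMap.range (TensorProduct.mk k V W v₁) ⊔
        LinearMap.range ((TensorProduct.mk k V W).flip w₁)) ⊓
      (LinearMap.range (TensorProduct.mk k V W v₂) ⊔
        LinearMap.range ((TensorProduct.mk k V W).flip w₂))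
      = Submodule.span k {v₁ ⊗ₜ[k] w₂, v₂ ⊗ₜ[k] w₁}) ∧
    Module.finrank k (Submodule.span k {v₁ ⊗ₜ[k] w₂, v₂ ⊗ₜ[k] w₁} : Submodule k (V ⊗[k] W))
      = 2 :=
  stmt2_general k V W v₁ v₂ w₁ w₂ hv hw
end

section
/- In characteristic 2, the degree-3 homogeneous polynomials in k[x,y,z] whose xyz-coefficient vanishes are exactly the elements of the image of the multiplication map F*H⁰(O_{ℙ²}(1)) ⊗ H⁰(O_{ℙ²}(1)) → H⁰(O_{ℙ²}(3)), i.e., the span of products ℓ² · m of a square of a linear form with a linear form. -/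
/-!
Squaring is additive in characteristic 2, so for a linear form `ℓ = Σ cᵢ xᵢ` we get
`ℓ² = Σ cᵢ² xᵢ²`; every monomial of `ℓ² m` therefore has an exponent `≥ 2`, and `xyz` never
occurs. Conversely, a cubic monomial in three variables other than `xyz` has an exponent `≥ 2`,
so it is `xᵢ² xⱼ`, itself a generator.
-/

open MvPolynomial

namespace Finsupp

variable {σ : Type*}

theorem exists_eq_single_of_degree_eq_one {e : σ →₀ ℕ} (he : e.degree = 1) :
    ∃ j, e = single j 1 := by
  have he0 : e ≠ 0 := by
    rintro rfl
    simp at he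
  obtain ⟨j, hj⟩ := Finsupp.ne_iff.mp he0
  obtain ⟨r, rfl⟩ := exists_add_of_le (single_le_iff.mpr (Nat.one_le_iff_ne_zero.mpr hj))
  have hr : r.degree = 0 := by simpa using he
  exact ⟨j, by rw [(degree_eq_zero_iff r).mp hr, add_zero]⟩

theorem exists_eq_single_two_add_single_one {d : σ →₀ ℕ} (hd : d.degree = 3) {i : σ}
    (hi : 2 ≤ d i) : ∃ j, d = single i 2 + single j 1 := by
  obtain ⟨e, rfl⟩ := exists_add_of_le (single_le_iff.mpr hi)
  obtain ⟨j, rfl⟩ := exists_eq_single_of_degree_eq_one (e := e) (by simp at hd; omega)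
  exact ⟨j, rfl⟩

theorem exists_two_le_of_degree_eq_three {d : Fin 3 →₀ ℕ} (hd : d.degree = 3)
    (hne : d ≠ single 0 1 + single 1 1 + single 2 1) : ∃ i, 2 ≤ d i := by
  by_contra! h
  rw [degree_eq_sum, Fin.sum_univ_three] at hd
  have := h 0; have := h 1; have := h 2
  apply hne
  ext i
  fin_cases i <;> simp <;> omega

end Finsupp

namespace MvPolynomial

variable {σ R : Type*} [CommSemiring R]

theorem coeff_pow_expChar_mul_eq_zero (p : ℕ) [ExpChar R p] {ℓ : MvPolynomial σ R}
    (hℓ : constantCoeff ℓ = 0) (m : MvPolynomial σ R) {t : σ →₀ ℕ} (ht : ∀ i, t i < p) :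
    coeff t (ℓ ^ p * m) = 0 := by
  classical
  have hpow : ℓ ^ p = ∑ d ∈ ℓ.support, monomial (p • d) (coeff d ℓ ^ p) := by
    conv_lhs => rw [ℓ.as_sum]
    simp only [sum_pow_char, monomial_pow]
  rw [hpow, Finset.sum_mul, coeff_sum]
  refine Finset.sum_eq_zero fun d hd => ?_
  have hd0 : d ≠ 0 := by
    rintro rfl
    exact mem_support_iff.mp hd (by rwa [← constantCoeff_eq])
  obtain ⟨i, hi⟩ := Finsupp.ne_iff.mp hd0
  rw [coeff_monomial_mul', if_neg]
  intro hle
  have hpi : p * d i ≤ t i := hle i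
  exact (ht i).not_ge (le_trans (Nat.le_mul_of_pos_right p (Nat.pos_of_ne_zero hi)) hpi)

variable (σ R) in
def squareMulLinear : Set (MvPolynomial σ R) :=
  {g | ∃ ℓ m : MvPolynomial σ R, ℓ.IsHomogeneous 1 ∧ m.IsHomogeneous 1 ∧ g = ℓ ^ 2 * m}

theorem coeff_eq_zero_of_mem_span_squareMulLinear [ExpChar R 2] {f : MvPolynomial σ R}
    (hf : f ∈ Submodule.span R (squareMulLinear σ R)) {t : σ →₀ ℕ} (ht : ∀ i, t i ≤ 1) :
    coeff t f = 0 := by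
  have hspan : Submodule.span R (squareMulLinear σ R) ≤ LinearMap.ker (lcoeff R t) := by
    refine Submodule.span_le.mpr ?_
    rintro _ ⟨ℓ, m, hℓ, -, rfl⟩
    exact coeff_pow_expChar_mul_eq_zero 2 (hℓ.coeff_eq_zero (by simp)) m
      (fun i => Nat.lt_succ_of_le (ht i))
  exact hspan hf

theorem monomial_single_two_add_single_one_mem_span_squareMulLinear (i j : σ) (c : R) :
    monomial (Finsupp.single i 2 + Finsupp.single j 1) c ∈
      Submodule.span R (squareMulLinear σ R) := by
  have hmon : monomial (Finsupp.single i 2 + Finsupp.single j 1) c = c • (X i ^ 2 * X j) := by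
    rw [X_pow_eq_monomial, X, monomial_mul, smul_monomial, smul_eq_mul, mul_one, mul_one]
  rw [hmon]
  exact Submodule.smul_mem _ _
    (Submodule.subset_span ⟨X i, X j, isHomogeneous_X _ _, isHomogeneous_X _ _, rfl⟩)

theorem mem_span_squareMulLinear_of_coeff_eq_zero {f : MvPolynomial (Fin 3) R}
    (hf : f.IsHomogeneous 3)
    (hxyz : coeff (Finsupp.single 0 1 + Finsupp.single 1 1 + Finsupp.single 2 1) f = 0) :
    f ∈ Submodule.span R (squareMulLinear (Fin 3) R) := by
  rw [f.as_sum]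
  refine Submodule.sum_mem _ fun d hd => ?_
  have hc : coeff d f ≠ 0 := mem_support_iff.mp hd
  have hdeg : d.degree = 3 := by
    by_contra h
    exact hc (hf.coeff_eq_zero h)
  obtain ⟨i, hi⟩ := Finsupp.exists_two_le_of_degree_eq_three hdeg (by rintro rfl; exact hc hxyz)
  obtain ⟨j, rfl⟩ := Finsupp.exists_eq_single_two_add_single_one hdeg hi
  exact monomial_single_two_add_single_one_mem_span_squareMulLinear i j _

end MvPolynomial

/-- In characteristic 2, the degree-3 homogeneous polynomials in `k[x,y,z]`
whose `xyz`-coefficient vanishes are exactly the elements of the span of the products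
`ℓ² · m` of a square of a linear form `ℓ` with a linear form `m` (the image of
`F*H⁰(O(1)) ⊗ H⁰(O(1)) → H⁰(O(3))`). -/
theorem stmt6 (k : Type*) [Field k] [CharP k 2]
    (f : MvPolynomial (Fin 3) k) (hf : f.IsHomogeneous 3) :
    f ∈ Submodule.span k
        {g : MvPolynomial (Fin 3) k |
          ∃ ℓ m : MvPolynomial (Fin 3) k,
            ℓ.IsHomogeneous 1 ∧ m.IsHomogeneous 1 ∧ g = ℓ ^ 2 * m} ↔
      MvPolynomial.coeff
        (Finsupp.single (0 : Fin 3) 1 + Finsupp.single 1 1 + Finsupp.single 2 1) f = 0 :=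
  ⟨fun h => coeff_eq_zero_of_mem_span_squareMulLinear h fun i => by fin_cases i <;> simp,
    mem_span_squareMulLinear_of_coeff_eq_zero hf⟩
end
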